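/- (Theorem 1, case 0 < a < a_-) Let b ∈ (0,1), a_- = (1 - √(1 - b²))/2, and 0 < a < a_-. With w_±, t_± and F as below, there exists a unique pair of real numbers (η, γ) with η ≤ -4a such that, setting u_± = (η ± √(η² + 4aη))/(2η) (which lie in (0,1)), the two equations F(t_+, w_+) = a ln u_- - a ln(1 - u_-) + η u_- + γ and F(t_-, w_-) = a ln u_+ - a ln(1 - u_+) + η u_+ + γ hold simultaneously. -/

import Mathlib

set_option maxHeartbeats 1000000

/-- Real phase `F(t,w) = b ln(1-t) + (1-b) ln t + a ln w - a ln(1-w) + b ln(1-(1-t)w)`. -/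
noncomputable def Fphase (a b t w : ℝ) : ℝ :=
  b * Real.log (1 - t) + (1 - b) * Real.log t + a * Real.log w - a * Real.log (1 - w) +
    b * Real.log (1 - (1 - t) * w)

/-- `u_- = (η - √(η²+4aη))/(2η)`. -/
noncomputable def uminus (a η : ℝ) : ℝ := (η - Real.sqrt (η ^ 2 + 4 * a * η)) / (2 * η)

/-- `u_+ = (η + √(η²+4aη))/(2η)`. -/
noncomputable def uplus (a η : ℝ) : ℝ := (η + Real.sqrt (η ^ 2 + 4 * a * η)) / (2 * η)

open Real Set

/-- The auxiliary strictly monotone function `χ`. -/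
noncomputable def chiF (u : ℝ) : ℝ :=
  2 * (Real.log (1 - u) - Real.log u) - (1 - 2 * u) / (u * (1 - u))

/-- The difference `F(t₊,w₊) - F(t₋,w₋)` as a function of `a`, in simplified log form. -/
noncomputable def ggF (b x : ℝ) : ℝ :=
  2 * b * (Real.log (2 - 2*x + b - Real.sqrt (b^2 - 4*x + 4*x^2)) -
           Real.log (2 - 2*x + b + Real.sqrt (b^2 - 4*x + 4*x^2)))
  + (1 - b) * (Real.log (2 - 2*x - b^2 + b * Real.sqrt (b^2 - 4*x + 4*x^2)) -
               Real.log (2 - 2*x - b^2 - b * Real.sqrt (b^2 - 4*x + 4*x^2)))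
  + 2 * x * (Real.log (b + Real.sqrt (b^2 - 4*x + 4*x^2)) -
             Real.log (b - Real.sqrt (b^2 - 4*x + 4*x^2)))

lemma chiF_half : chiF (1/2) = 0 := by norm_num [chiF]

lemma chiF_hasDeriv (u : ℝ) (h0 : 0 < u) (h1 : u < 1/2) :
    HasDerivAt chiF ((1-2*u)^2/(u*(1-u))^2) u := by
  have h1' : (0:ℝ) < 1 - u := by linarith
  have hu : u ≠ 0 := ne_of_gt h0
  have h1u : (1:ℝ) - u ≠ 0 := ne_of_gt h1'
  have hA : HasDerivAt (fun y : ℝ => 1 - y) (-1) u := by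
    simpa using (hasDerivAt_id u).const_sub 1
  have hlog1 : HasDerivAt (fun y : ℝ => Real.log (1 - y)) (-1/(1-u)) u := by
    simpa using hA.log h1u
  have hlogu : HasDerivAt Real.log u⁻¹ u := Real.hasDerivAt_log hu
  have hnum : HasDerivAt (fun y : ℝ => 1 - 2*y) (-2) u := by
    simpa using ((hasDerivAt_id u).const_mul 2).const_sub 1
  have hden : HasDerivAt (fun y : ℝ => y * (1 - y)) (1*(1-u)+u*(-1)) u :=
    (hasDerivAt_id u).mul hA
  have hden' : u * (1 - u) ≠ 0 := by positivity
  have hq := hnum.div hden hden'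
  have hfin := ((hlog1.sub hlogu).const_mul 2).sub hq
  have heq : 2 * (-1/(1-u) - u⁻¹) - (-2 * (u*(1-u)) - (1-2*u)*(1*(1-u)+u*(-1)))/(u*(1-u))^2
      = (1-2*u)^2/(u*(1-u))^2 := by
    field_simp
    ring
  rw [← heq]
  exact hfin

lemma chiF_cont : ContinuousOn chiF (Ioc (0:ℝ) (1/2)) := by
  have h1 : ∀ x ∈ Ioc (0:ℝ) (1/2), (1:ℝ) - x ≠ 0 := fun x hx => by
    have := hx.2; norm_num at this ⊢; linarith
  have h0 : ∀ x ∈ Ioc (0:ℝ) (1/2), x ≠ 0 := fun x hx => ne_of_gt hx.1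
  apply ContinuousOn.sub
  · exact (continuousOn_const.mul (((continuous_const.sub continuous_id).continuousOn.log h1).sub
      (continuousOn_id.log h0)))
  · exact (continuous_const.sub (continuous_const.mul continuous_id)).continuousOn.div
      (continuous_id.mul (continuous_const.sub continuous_id)).continuousOn
      (fun x hx => by
        have h1 : 0 < x := hx.1
        have h2 : x ≤ 1/2 := hx.2
        have h3 : (0:ℝ) < 1 - x := by linarith
        positivity)

lemma chiF_strictMono : StrictMonoOn chiF (Ioc (0:ℝ) (1/2)) := by
  apply strictMonoOn_of_deriv_pos (convex_Ioc _ _) chiF_cont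
  intro x hx
  rw [interior_Ioc] at hx
  rw [(chiF_hasDeriv x hx.1 hx.2).deriv]
  have h2 : (0:ℝ) < 1 - 2*x := by linarith [hx.2]
  have h3 : (0:ℝ) < 1 - x := by linarith [hx.2]
  have h1 := hx.1
  positivity

lemma chiF_exists (c : ℝ) (hc : c ≤ 0) : ∃ u ∈ Ioc (0:ℝ) (1/2), chiF u = c := by
  set v : ℝ := 10 - c with hv
  have hv10 : (10:ℝ) ≤ v := by simp [hv]; linarith
  have hv0 : (0:ℝ) < v := by linarith
  set u₀ : ℝ := (v⁻¹)^2 with hu₀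
  have hu₀0 : 0 < u₀ := by positivity
  have hvi : (0:ℝ) ≤ v⁻¹ := by positivity
  have hvv : v * v⁻¹ = 1 := mul_inv_cancel₀ (ne_of_gt hv0)
  have hvi10 : v⁻¹ ≤ 1/10 := by nlinarith
  have hu₀4 : u₀ ≤ 1/4 := by rw [hu₀]; nlinarith
  have hbound : chiF u₀ ≤ c := by
    have hlog1 : Real.log (1 - u₀) ≤ 0 := Real.log_nonpos (by linarith) (by linarith)
    have hlogu : Real.log u₀ = -2 * Real.log v := by
      rw [hu₀, Real.log_pow, Real.log_inv]; push_cast; ring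
    have hlv : Real.log v ≤ v - 1 := Real.log_le_sub_one_of_pos hv0
    have hfrac : (1/2)/u₀ ≤ (1 - 2*u₀)/(u₀*(1-u₀)) := by
      rw [div_le_div_iff₀ (by positivity) (mul_pos hu₀0 (by linarith))]
      nlinarith [hu₀0, hu₀4]
    calc chiF u₀ = 2*Real.log (1-u₀) + 4*Real.log v - (1-2*u₀)/(u₀*(1-u₀)) := by
            rw [chiF, hlogu]; ring
      _ ≤ 2*0 + 4*(v-1) - (1/2)/u₀ := by linarith [hlog1, hlv, hfrac]
      _ = 4*v - 4 - v^2/2 := by rw [hu₀]; field_simp; ring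
      _ ≤ c := by nlinarith [hc]
  have hsub : Icc u₀ (1/2) ⊆ Ioc (0:ℝ) (1/2) := fun x hx => ⟨lt_of_lt_of_le hu₀0 hx.1, hx.2⟩
  have hivt := intermediate_value_Icc (by linarith : u₀ ≤ 1/2) (chiF_cont.mono hsub)
  have hmem : c ∈ Icc (chiF u₀) (chiF (1/2)) := by
    rw [chiF_half]; exact ⟨hbound, hc⟩
  obtain ⟨u, hu, hcu⟩ := hivt hmem
  exact ⟨u, hsub hu, hcu⟩

lemma uplus_facts (a η : ℝ) (ha : 0 < a) (hη : η ≤ -4*a) :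
    uplus a η ∈ Ioc (0:ℝ) (1/2) ∧ uminus a η = 1 - uplus a η ∧
      η * (uplus a η * (1 - uplus a η)) = -a := by
  have hη0 : η < 0 := by linarith
  have hηne : η ≠ 0 := ne_of_lt hη0
  have harg : 0 ≤ η ^ 2 + 4 * a * η := by nlinarith
  set s := Real.sqrt (η ^ 2 + 4 * a * η) with hs
  have hs0 : 0 ≤ s := Real.sqrt_nonneg _
  have hs2 : s ^ 2 = η ^ 2 + 4 * a * η := Real.sq_sqrt harg
  have hslt : s < -η := by
    nlinarith [hs2, hs0]
  have hup : uplus a η = (η + s) / (2 * η) := rfl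
  have hum : uminus a η = (η - s) / (2 * η) := rfl
  have h1 : uminus a η = 1 - uplus a η := by
    rw [hup, hum]; field_simp; ring
  have hpos : 0 < uplus a η := by
    rw [hup]
    apply div_pos_of_neg_of_neg (by linarith) (by linarith)
  have hhalf : uplus a η ≤ 1/2 := by
    rw [hup, div_le_iff_of_neg (by linarith : 2 * η < 0)]
    linarith
  refine ⟨⟨hpos, hhalf⟩, h1, ?_⟩
  rw [hup]
  field_simp
  ring_nf
  nlinarith [hs2]

lemma uplus_of_u (a u : ℝ) (ha : 0 < a) (hu : u ∈ Ioc (0:ℝ) (1/2)) :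
    -a/(u*(1-u)) ≤ -4*a ∧ uplus a (-a/(u*(1-u))) = u := by
  obtain ⟨hu0, hu2⟩ := hu
  have h1u : 0 < 1 - u := by linarith
  have hk : 0 < u * (1-u) := mul_pos hu0 h1u
  have hk4 : u * (1-u) ≤ 1/4 := by nlinarith
  constructor
  · rw [div_le_iff₀ hk]
    nlinarith
  · set η := -a/(u*(1-u)) with hηd
    have hηne : η ≠ 0 := by
      rw [hηd]; exact ne_of_lt (div_neg_of_neg_of_pos (by linarith) hk)
    have harg : η ^ 2 + 4 * a * η = (a*(1-2*u)/(u*(1-u)))^2 := by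
      rw [hηd]; field_simp; ring
    rw [uplus, harg, Real.sqrt_sq (div_nonneg (by nlinarith) (le_of_lt hk))]
    rw [hηd]
    field_simp
    ring

lemma ggF_hasDeriv (b x : ℝ) (hb0 : 0 < b) (hb1 : b < 1) (hx0 : 0 < x) (hx2 : x < 1/2)
    (hex : 0 < b^2 - 4*x + 4*x^2) :
    HasDerivAt (ggF b)
      (2 * (Real.log (b + Real.sqrt (b^2 - 4*x + 4*x^2)) -
            Real.log (b - Real.sqrt (b^2 - 4*x + 4*x^2)))) x := by
  have hx1 : 0 < 1 - x := by linarith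
  set s := Real.sqrt (b^2 - 4*x + 4*x^2) with hsdef
  have hs0 : 0 < s := Real.sqrt_pos.mpr hex
  have hs2 : s ^ 2 = b^2 - 4*x + 4*x^2 := Real.sq_sqrt hex.le
  have hsb : s < b := by nlinarith [hs2, hs0]
  have hP : 0 < 2 - 2*x + b - s := by nlinarith
  have hQ : 0 < 2 - 2*x + b + s := by nlinarith
  have hNp : 0 < 2 - 2*x - b^2 + b*s := by nlinarith
  have hNm : 0 < 2 - 2*x - b^2 - b*s := by
    have hprod : (2 - 2*x - b^2 + b*s)*(2 - 2*x - b^2 - b*s) = 4*(1-x)^2*(1-b^2) := by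
      linear_combination (-(b^2)) * hs2
    have hb2 : (0:ℝ) < 1 - b^2 := by nlinarith
    nlinarith [hprod, hNp, mul_pos (mul_pos hx1 hx1) hb2]
  have hbp : 0 < b + s := by linarith
  have hbm : 0 < b - s := by linarith
  have he : HasDerivAt (fun y : ℝ => b^2 - 4*y + 4*y^2) (8*x - 4) x := by
    have h := (((hasDerivAt_pow 2 x).const_mul (4:ℝ)).sub
      ((hasDerivAt_id x).const_mul 4)).const_add (b^2)
    convert h using 1
    · rfl
    · rfl
    · funext y; simp only [id_eq, Pi.sub_apply]; ring
    · push_cast; ring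
  have hd : HasDerivAt (fun y : ℝ => Real.sqrt (b^2 - 4*y + 4*y^2)) ((8*x-4)/(2*s)) x := by
    simpa [← hsdef] using he.sqrt (ne_of_gt hex)
  set d' : ℝ := (8*x-4)/(2*s) with hd'def
  have hlin : HasDerivAt (fun y : ℝ => 2 - 2*y + b) (-2) x := by
    have h := (((hasDerivAt_id x).const_mul (-2:ℝ))).add_const (2 + b)
    convert h using 1
    · rfl
    · rfl
    · funext y; simp only [id_eq]; ring
    · ring
  have hlin2 : HasDerivAt (fun y : ℝ => 2 - 2*y - b^2) (-2) x := by
    have h := (((hasDerivAt_id x).const_mul (-2:ℝ))).add_const (2 - b^2)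
    convert h using 1
    · rfl
    · rfl
    · funext y; simp only [id_eq]; ring
    · ring
  -- the six log-argument functions
  have hfP : HasDerivAt (fun y : ℝ => 2 - 2*y + b - Real.sqrt (b^2 - 4*y + 4*y^2))
      (-2 - d') x := hlin.sub hd
  have hfQ : HasDerivAt (fun y : ℝ => 2 - 2*y + b + Real.sqrt (b^2 - 4*y + 4*y^2))
      (-2 + d') x := hlin.add hd
  have hfNp : HasDerivAt (fun y : ℝ => 2 - 2*y - b^2 + b * Real.sqrt (b^2 - 4*y + 4*y^2))
      (-2 + b * d') x := hlin2.add (hd.const_mul b)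
  have hfNm : HasDerivAt (fun y : ℝ => 2 - 2*y - b^2 - b * Real.sqrt (b^2 - 4*y + 4*y^2))
      (-2 - b * d') x := hlin2.sub (hd.const_mul b)
  have hfbp : HasDerivAt (fun y : ℝ => b + Real.sqrt (b^2 - 4*y + 4*y^2)) d' x := by
    simpa using hd.const_add b
  have hfbm : HasDerivAt (fun y : ℝ => b - Real.sqrt (b^2 - 4*y + 4*y^2)) (-d') x := by
    have h := (hasDerivAt_const x b).sub hd
    rw [zero_sub] at h
    exact h
  -- logs
  have h1 := ((hfP.log (ne_of_gt hP)).sub (hfQ.log (ne_of_gt hQ))).const_mul (2*b)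
  have h2 := ((hfNp.log (ne_of_gt hNp)).sub (hfNm.log (ne_of_gt hNm))).const_mul (1-b)
  have h3in := (hfbp.log (ne_of_gt hbp)).sub (hfbm.log (ne_of_gt hbm))
  have hid2 : HasDerivAt (fun y : ℝ => 2*y) 2 x := by
    simpa using (hasDerivAt_id x).const_mul (2:ℝ)
  have h3 := hid2.mul h3in
  have htot := (h1.add h2).add h3
  have hkey : 2*b * ((-2 - d')/(2 - 2*x + b - s) - (-2 + d')/(2 - 2*x + b + s))
      + (1-b) * ((-2 + b*d')/(2 - 2*x - b^2 + b*s) - (-2 - b*d')/(2 - 2*x - b^2 - b*s))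
      + 2*x * (d'/(b + s) - (-d')/(b - s)) = 0 := by
    have hds : d' * s = 4*x - 2 := by
      rw [hd'def]; field_simp; ring
    have k1 : (-2 - d')/(2 - 2*x + b - s) - (-2 + d')/(2 - 2*x + b + s) = (2-2*x-b)/(s*(1-x)) := by
      rw [div_sub_div _ _ hP.ne' hQ.ne', div_eq_div_iff (by positivity) (by positivity)]
      linear_combination (-4*(1-x) + (2-2*x-b)) * hs2 + (-2*(2-2*x+b)*(1-x)) * hds
    have k2 : (-2 + b*d')/(2 - 2*x - b^2 + b*s) - (-2 - b*d')/(2 - 2*x - b^2 - b*s) = (-2*b)/(s*(1-x)) := by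
      rw [div_sub_div _ _ hNp.ne' hNm.ne', div_eq_div_iff (by positivity) (by positivity)]
      linear_combination (4*b*(1-x) - 2*b^3) * hs2 + (2*b*(2-2*x-b^2)*(1-x)) * hds
    have k3 : d'/(b + s) - (-d')/(b - s) = b*(2*x-1)/(x*s*(1-x)) := by
      rw [div_sub_div _ _ hbp.ne' hbm.ne', div_eq_div_iff (by positivity) (by positivity)]
      linear_combination (b*(2*x-1)) * hs2 + (2*b*x*(1-x)) * hds
    rw [k1, k2, k3]
    field_simp
    ring
  convert htot using 1
  · rfl
  · rfl
  · rfl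
  simp only [Pi.sub_apply]
  rw [← hsdef]
  linear_combination -hkey

lemma ggF_nonpos (a b : ℝ) (hb0 : 0 < b) (hb1 : b < 1) (ha : 0 < a)
    (ha' : a < (1 - Real.sqrt (1 - b ^ 2)) / 2) : ggF b a ≤ 0 := by
  have hb2 : (0:ℝ) < 1 - b^2 := by nlinarith
  set t : ℝ := Real.sqrt (1 - b^2) with htdef
  have ht2 : t^2 = 1 - b^2 := Real.sq_sqrt hb2.le
  have ht0 : 0 < t := Real.sqrt_pos.mpr hb2
  have ht1 : t < 1 := by nlinarith [ht0]
  set m : ℝ := (1 - t)/2 with hmdef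
  have hm0 : 0 < m := by rw [hmdef]; linarith
  have hm2 : m < 1/2 := by rw [hmdef]; linarith
  have hem : b^2 - 4*m + 4*m^2 = 0 := by rw [hmdef]; linear_combination ht2
  have haam : a < m := ha'
  -- positivity pack on Icc a m
  have hpack : ∀ x ∈ Icc a m, 0 < x ∧ x < 1/2 ∧ 0 ≤ b^2 - 4*x + 4*x^2 ∧
      Real.sqrt (b^2 - 4*x + 4*x^2) < b := by
    intro x hx
    have hx0 : 0 < x := lt_of_lt_of_le ha hx.1
    have hx2 : x < 1/2 := lt_of_le_of_lt hx.2 hm2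
    have hex0 : 0 ≤ b^2 - 4*x + 4*x^2 := by
      nlinarith [mul_nonneg (sub_nonneg.2 hx.2) (by linarith : (0:ℝ) ≤ 1 - x - m), hem]
    have hs2 : Real.sqrt (b^2 - 4*x + 4*x^2) ^ 2 = b^2 - 4*x + 4*x^2 := Real.sq_sqrt hex0
    have hs0 : 0 ≤ Real.sqrt (b^2 - 4*x + 4*x^2) := Real.sqrt_nonneg _
    refine ⟨hx0, hx2, hex0, ?_⟩
    nlinarith [hs2, hs0]
  have hposP : ∀ x ∈ Icc a m, 0 < 2 - 2*x + b - Real.sqrt (b^2 - 4*x + 4*x^2) := by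
    intro x hx; obtain ⟨h1, h2, h3, h4⟩ := hpack x hx; linarith
  have hposQ : ∀ x ∈ Icc a m, 0 < 2 - 2*x + b + Real.sqrt (b^2 - 4*x + 4*x^2) := by
    intro x hx; obtain ⟨h1, h2, h3, h4⟩ := hpack x hx
    have := Real.sqrt_nonneg (b^2 - 4*x + 4*x^2); linarith
  have hposNp : ∀ x ∈ Icc a m, 0 < 2 - 2*x - b^2 + b * Real.sqrt (b^2 - 4*x + 4*x^2) := by
    intro x hx; obtain ⟨h1, h2, h3, h4⟩ := hpack x hx
    have := Real.sqrt_nonneg (b^2 - 4*x + 4*x^2); nlinarith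
  have hposNm : ∀ x ∈ Icc a m, 0 < 2 - 2*x - b^2 - b * Real.sqrt (b^2 - 4*x + 4*x^2) := by
    intro x hx; obtain ⟨h1, h2, h3, h4⟩ := hpack x hx
    set s := Real.sqrt (b^2 - 4*x + 4*x^2) with hs
    have hs2 : s^2 = b^2 - 4*x + 4*x^2 := Real.sq_sqrt h3
    have hprod : (2 - 2*x - b^2 + b*s) * (2 - 2*x - b^2 - b*s) = 4*(1-x)^2*(1-b^2) := by
      linear_combination (-(b^2)) * hs2
    have hNp := hposNp x hx
    have hx1 : (0:ℝ) < 1 - x := by linarith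
    have hpos4 : (0:ℝ) < 4*(1-x)^2*(1-b^2) := mul_pos (by positivity) hb2
    by_contra hcon
    push_neg at hcon
    nlinarith [mul_nonneg hNp.le (neg_nonneg.2 hcon), hprod, hpos4]
  have hposbp : ∀ x ∈ Icc a m, 0 < b + Real.sqrt (b^2 - 4*x + 4*x^2) := by
    intro x hx; have := Real.sqrt_nonneg (b^2 - 4*x + 4*x^2); linarith
  have hposbm : ∀ x ∈ Icc a m, 0 < b - Real.sqrt (b^2 - 4*x + 4*x^2) := by
    intro x hx; obtain ⟨h1, h2, h3, h4⟩ := hpack x hx; linarith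
  -- continuity
  have hcs : Continuous (fun x : ℝ => Real.sqrt (b^2 - 4*x + 4*x^2)) := by
    apply Real.continuous_sqrt.comp; fun_prop
  have hcont : ContinuousOn (ggF b) (Icc a m) := by
    unfold ggF
    apply ContinuousOn.add
    apply ContinuousOn.add
    · exact continuousOn_const.mul ((ContinuousOn.log (by fun_prop)
        (fun x hx => ne_of_gt (hposP x hx))).sub (ContinuousOn.log (by fun_prop)
        (fun x hx => ne_of_gt (hposQ x hx))))
    · exact continuousOn_const.mul ((ContinuousOn.log (by fun_prop)
        (fun x hx => ne_of_gt (hposNp x hx))).sub (ContinuousOn.log (by fun_prop)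
        (fun x hx => ne_of_gt (hposNm x hx))))
    · exact (continuous_const.mul continuous_id).continuousOn.mul
        ((ContinuousOn.log (by fun_prop) (fun x hx => ne_of_gt (hposbp x hx))).sub
         (ContinuousOn.log (by fun_prop) (fun x hx => ne_of_gt (hposbm x hx))))
  -- monotonicity
  have hderiv : ∀ x ∈ interior (Icc a m),
      HasDerivAt (ggF b) (2 * (Real.log (b + Real.sqrt (b^2 - 4*x + 4*x^2)) -
        Real.log (b - Real.sqrt (b^2 - 4*x + 4*x^2)))) x := by
    intro x hx
    rw [interior_Icc] at hx
    have hx0 : 0 < x := lt_of_lt_of_le ha hx.1.le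
    have hx2 : x < 1/2 := lt_trans hx.2 hm2
    have hex : 0 < b^2 - 4*x + 4*x^2 := by
      nlinarith [mul_pos (sub_pos.2 hx.2) (by linarith : (0:ℝ) < 1 - x - m), hem]
    exact ggF_hasDeriv b x hb0 hb1 hx0 hx2 hex
  have hmono : MonotoneOn (ggF b) (Icc a m) := by
    apply monotoneOn_of_deriv_nonneg (convex_Icc a m) hcont
    · intro x hx
      exact (hderiv x hx).differentiableAt.differentiableWithinAt
    · intro x hx
      rw [(hderiv x hx).deriv]
      rw [interior_Icc] at hx
      have hxm : x ∈ Icc a m := ⟨hx.1.le, hx.2.le⟩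
      have h1 := hposbm x hxm
      have h2 := Real.sqrt_nonneg (b^2 - 4*x + 4*x^2)
      have hlog := Real.log_le_log h1 (by linarith :
        b - Real.sqrt (b^2 - 4*x + 4*x^2) ≤ b + Real.sqrt (b^2 - 4*x + 4*x^2))
      linarith
  have hend : ggF b m = 0 := by
    rw [ggF, hem, Real.sqrt_zero]
    simp only [add_zero, sub_zero, mul_zero]
    ring
  have := hmono (⟨le_refl a, haam.le⟩ : a ∈ Icc a m) (⟨haam.le, le_refl m⟩ : m ∈ Icc a m) haam.le
  linarith [hend ▸ this]

lemma Fdiff_eq (a b D wp wm tp tm : ℝ)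
    (hb0 : 0 < b) (hb1 : b < 1)
    (ha : 0 < a) (ha' : a < (1 - Real.sqrt (1 - b ^ 2)) / 2)
    (hD : D = Real.sqrt (b ^ 2 - 4 * a + 4 * a ^ 2))
    (hwp : wp = (b + D) / (2 * b))
    (hwm : wm = (b - D) / (2 * b))
    (htp : tp = (2 - 2 * a - b ^ 2 + b * D) / (2 * (1 - a) * (1 + b)))
    (htm : tm = (2 - 2 * a - b ^ 2 - b * D) / (2 * (1 - a) * (1 + b))) :
    Fphase a b tp wp - Fphase a b tm wm = ggF b a := by
  have hb2 : (0:ℝ) < 1 - b^2 := by nlinarith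
  have ht2 : Real.sqrt (1 - b^2) ^ 2 = 1 - b^2 := Real.sq_sqrt hb2.le
  have ht0 : 0 ≤ Real.sqrt (1 - b^2) := Real.sqrt_nonneg _
  have ha2 : a < 1/2 := by nlinarith [ha', ht0]
  have hE : 0 < b^2 - 4*a + 4*a^2 := by nlinarith [ha', ht0, ht2]
  have hE' : b ^ 2 - 4 * a + 4 * a ^ 2 = b^2 - 4*a + 4*a^2 := by ring
  have hD0 : 0 < D := by rw [hD, hE']; exact Real.sqrt_pos.mpr hE
  have hD2 : D^2 = b^2 - 4*a + 4*a^2 := by rw [hD, hE']; exact Real.sq_sqrt hE.le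
  have hDb : D < b := by nlinarith [hD2, hD0]
  have ha1 : 0 < 1 - a := by linarith
  have hb1' : (0:ℝ) < 1 + b := by linarith
  have hc0 : 0 < 2*(1-a)*(1+b) := by positivity
  have hP : 0 < 2 - 2*a + b - D := by linarith
  have hQ : 0 < 2 - 2*a + b + D := by linarith
  have hNp : 0 < 2 - 2*a - b^2 + b*D := by nlinarith
  have hNm : 0 < 2 - 2*a - b^2 - b*D := by
    have hprod : (2 - 2*a - b^2 + b*D) * (2 - 2*a - b^2 - b*D) = 4*(1-a)^2*(1-b^2) := by
      linear_combination (-(b^2)) * hD2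
    have hpos4 : (0:ℝ) < 4*(1-a)^2*(1-b^2) := mul_pos (by positivity) hb2
    by_contra hcon
    push_neg at hcon
    nlinarith [mul_nonneg hNp.le (neg_nonneg.2 hcon), hprod, hpos4]
  have hbp : 0 < b + D := by linarith
  have hbm : 0 < b - D := by linarith
  -- algebraic identities
  have h1p : 1 - tp = b*(2 - 2*a + b - D) / (2*(1-a)*(1+b)) := by
    rw [htp]; field_simp; ring
  have h1m : 1 - tm = b*(2 - 2*a + b + D) / (2*(1-a)*(1+b)) := by
    rw [htm]; field_simp; ring
  have h2p : 1 - (1 - tp)*wp = (2 - 2*a + b - D)/(2*(1+b)) := by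
    rw [htp, hwp]; field_simp
    linear_combination b * hD2
  have h2m : 1 - (1 - tm)*wm = (2 - 2*a + b + D)/(2*(1+b)) := by
    rw [htm, hwm]; field_simp
    linear_combination b * hD2
  have h3p : 1 - wp = (b - D)/(2*b) := by rw [hwp]; field_simp; ring
  have h3m : 1 - wm = (b + D)/(2*b) := by rw [hwm]; field_simp; ring
  -- expand logs
  have hlogdiv : ∀ x y : ℝ, 0 < x → 0 < y → Real.log (x/y) = Real.log x - Real.log y :=
    fun x y hx hy => Real.log_div (ne_of_gt hx) (ne_of_gt hy)
  have hlogmul : ∀ x y : ℝ, 0 < x → 0 < y → Real.log (x*y) = Real.log x + Real.log y :=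
    fun x y hx hy => Real.log_mul (ne_of_gt hx) (ne_of_gt hy)
  rw [Fphase, Fphase, h2p, h2m, h1p, h1m, h3p, h3m, htp, htm, hwp, hwm, ggF]
  rw [show Real.sqrt (b^2 - 4*a + 4*a^2) = D from by rw [hD, hE']]
  rw [hlogdiv (b*(2 - 2*a + b - D)) (2*(1-a)*(1+b)) (mul_pos hb0 hP) hc0,
      hlogmul b (2 - 2*a + b - D) hb0 hP,
      hlogdiv (b*(2 - 2*a + b + D)) (2*(1-a)*(1+b)) (mul_pos hb0 hQ) hc0,
      hlogmul b (2 - 2*a + b + D) hb0 hQ,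
      hlogdiv (2 - 2*a - b^2 + b*D) (2*(1-a)*(1+b)) hNp hc0,
      hlogdiv (2 - 2*a - b^2 - b*D) (2*(1-a)*(1+b)) hNm hc0,
      hlogdiv (b+D) (2*b) hbp (by positivity),
      hlogdiv (b-D) (2*b) hbm (by positivity),
      hlogdiv (2 - 2*a + b - D) (2*(1+b)) hP (by positivity),
      hlogdiv (2 - 2*a + b + D) (2*(1+b)) hQ (by positivity)]
  ring

/-- (Theorem 1, case `0 < a < a_-`) There exists a unique pair `(η, γ)` with `η ≤ -4a`
such that, with `u_± = (η ± √(η²+4aη))/(2η) ∈ (0,1)`, the equations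
`F(t_+, w_+) = a ln u_- - a ln(1-u_-) + η u_- + γ` and
`F(t_-, w_-) = a ln u_+ - a ln(1-u_+) + η u_+ + γ` hold simultaneously. -/
theorem exists_unique_eta_gamma (a b D wp wm tp tm : ℝ)
    (hb : b ∈ Set.Ioo (0 : ℝ) 1)
    (ha : 0 < a) (ha' : a < (1 - Real.sqrt (1 - b ^ 2)) / 2)
    (hD : D = Real.sqrt (b ^ 2 - 4 * a + 4 * a ^ 2))
    (hwp : wp = (b + D) / (2 * b))
    (hwm : wm = (b - D) / (2 * b))
    (htp : tp = (2 - 2 * a - b ^ 2 + b * D) / (2 * (1 - a) * (1 + b)))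
    (htm : tm = (2 - 2 * a - b ^ 2 - b * D) / (2 * (1 - a) * (1 + b))) :
    ∃! p : ℝ × ℝ, p.1 ≤ -4 * a ∧
      uminus a p.1 ∈ Set.Ioo (0 : ℝ) 1 ∧ uplus a p.1 ∈ Set.Ioo (0 : ℝ) 1 ∧
      Fphase a b tp wp =
        a * Real.log (uminus a p.1) - a * Real.log (1 - uminus a p.1) +
          p.1 * uminus a p.1 + p.2 ∧
      Fphase a b tm wm =
        a * Real.log (uplus a p.1) - a * Real.log (1 - uplus a p.1) +
          p.1 * uplus a p.1 + p.2 := by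
  obtain ⟨hb0, hb1⟩ := hb
  set G : ℝ := Fphase a b tp wp - Fphase a b tm wm with hGdef
  have hG : G ≤ 0 := by
    rw [hGdef, Fdiff_eq a b D wp wm tp tm hb0 hb1 ha ha' hD hwp hwm htp htm]
    exact ggF_nonpos a b hb0 hb1 ha ha'
  have hGa : G / a ≤ 0 := div_nonpos_of_nonpos_of_nonneg hG ha.le
  obtain ⟨u, hu, hchi⟩ := chiF_exists (G/a) hGa
  obtain ⟨hu0, hu2⟩ := hu
  have h1u : 0 < 1 - u := by linarith
  have hk0 : 0 < u * (1 - u) := mul_pos hu0 h1u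
  set η : ℝ := -a/(u*(1-u)) with hηdef
  obtain ⟨hη4, hupη⟩ := uplus_of_u a u ha ⟨hu0, hu2⟩
  obtain ⟨humem, humin, huprod⟩ := uplus_facts a η ha hη4
  have huminval : uminus a η = 1 - u := by rw [humin, hupη]
  set γ : ℝ := Fphase a b tm wm - (a * Real.log u - a * Real.log (1 - u) + η * u) with hγdef
  have hηval : η * (1 - 2*u) = -(a * (1 - 2*u) / (u * (1-u))) := by
    rw [hηdef]; field_simp
  -- the two equations for our choice
  have hE2 : Fphase a b tm wm =
      a * Real.log (uplus a η) - a * Real.log (1 - uplus a η) + η * uplus a η + γ := by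
    rw [hupη, hγdef]; ring
  have hE1 : Fphase a b tp wp =
      a * Real.log (uminus a η) - a * Real.log (1 - uminus a η) + η * uminus a η + γ := by
    rw [huminval, show (1:ℝ) - (1 - u) = u by ring, hγdef]
    have hchia : a * chiF u = G := by
      rw [hchi]; field_simp
    rw [chiF] at hchia
    have : Fphase a b tp wp = G + Fphase a b tm wm := by rw [hGdef]; ring
    rw [this, ← hchia, hηdef]
    field_simp
    ring
  refine ⟨(η, γ), ⟨hη4, ?_, ?_, hE1, hE2⟩, ?_⟩
  · rw [huminval]; exact ⟨by linarith, by linarith⟩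
  · obtain ⟨h1, h2⟩ := humem; exact ⟨h1, by linarith⟩
  · rintro ⟨η', γ'⟩ ⟨hη'4, hum', hup', hE1', hE2'⟩
    dsimp only at hη'4 hum' hup' hE1' hE2'
    obtain ⟨humem', humin', huprod'⟩ := uplus_facts a η' ha hη'4
    set u' : ℝ := uplus a η' with hu'def
    have hu'0 := humem'.1
    have hu'2 := humem'.2
    have h1u' : 0 < 1 - u' := by linarith
    have hk0' : 0 < u' * (1 - u') := mul_pos hu'0 h1u'
    have hη'ne : η' ≠ 0 := by
      intro h; rw [h] at huprod'; simp at huprod'; linarith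
    have hη'val : η' = -a/(u'*(1-u')) := by
      field_simp
      linarith [huprod']
    have hchiu' : a * chiF u' = G := by
      have hdiff : G = (a * Real.log (uminus a η') - a * Real.log (1 - uminus a η') +
          η' * uminus a η') - (a * Real.log u' - a * Real.log (1 - u') + η' * u') := by
        rw [hGdef, hE1', hE2']; ring
      rw [humin', show (1:ℝ) - (1 - u') = u' by ring] at hdiff
      rw [chiF, hdiff, hη'val]
      field_simp
      ring
    have huu : u' = u := by
      apply chiF_strictMono.injOn humem' ⟨hu0, hu2⟩
      have haneq : a ≠ 0 := ne_of_gt ha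
      have := hchiu'
      have h2 : chiF u' = G / a := by field_simp at this ⊢; linarith [this]
      rw [h2, hchi]
    have hηη : η' = η := by rw [hη'val, huu, hηdef]
    have hγγ : γ' = γ := by
      rw [huu, hηη] at hE2'
      rw [hγdef]
      linarith [hE2']
    rw [Prod.mk.injEq]
    exact ⟨hηη, hγγ⟩
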